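/- arXiv:2210.16851 — 3 statements merged into one kernel-verified Lean document; each statement's English description precedes it below -/
import Mathlib

section
/- Let T > 1 (possibly T = ∞), let φ : [0,T) → ℝ be nonnegative and continuous with sup_{0 ≤ s ≤ 1} φ(s) > 0, and let K : [0,T) → ℝ be nonnegative and nondecreasing. Suppose there exist constants C₀ > 0 and ρ > 0 such that sup_{t ≤ s ≤ t+1} φ(s)^{1+ρ} ≤ C₀ (φ(t) − φ(t+1)) + K(t) for all 0 ≤ t ≤ T − 1. Then for all 0 ≤ t < T one has φ(t) ≤ ( C₀^{−1} ρ (t−1)⁺ + (sup_{0 ≤ s ≤ 1} φ(s))^{−ρ} )^{−1/ρ} + K(t)^{1/(ρ+1)}. -/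
/-!
Put `c = K(t)^{1/(1+ρ)}` and follow `φ` along the points `t - ⌊t⌋ + j`, `j = 0, …, ⌊t⌋`, the
first of which lies in `[0,1)`. Since `K` is nondecreasing, the recursion holds with `K(t)` in
place of `K` at each of these points, and superadditivity of `z ↦ z^{1+ρ}` lets one subtract `c`
from both sides: the excess `X_j = φ(t - ⌊t⌋ + j) - c` obeys `X_j^{1+ρ} ≤ C₀ (X_j - X_{j+1})` as
long as it is positive. By convexity of `z ↦ z^{-ρ}` this gives
`X_{j+1}^{-ρ} ≥ X_j^{-ρ} + ρ / C₀`, and summing over `j` gives the bound, because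
`⌊t⌋ ≥ (t - 1)⁺`.
-/

open Set

namespace Real

lemma one_sub_mul_le_rpow_neg {u ρ : ℝ} (hu : 0 < u) (hρ : 0 ≤ ρ) :
    1 - ρ * (u - 1) ≤ u ^ (-ρ) := by
  have h := one_add_mul_self_le_rpow_one_add (s := u⁻¹ - 1) (by linarith [inv_pos.2 hu])
    (p := 1 + ρ) (by linarith)
  have hsplit : u⁻¹ ^ (1 + ρ) = u⁻¹ * u ^ (-ρ) := by
    rw [inv_rpow hu.le, rpow_neg hu.le, rpow_add hu, rpow_one, mul_inv]
  rw [add_sub_cancel, hsplit] at h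
  have h' := mul_le_mul_of_nonneg_left h hu.le
  rw [← mul_assoc, mul_inv_cancel₀ hu.ne', one_mul] at h'
  linear_combination h' - (1 + ρ) * mul_inv_cancel₀ hu.ne'

/-- Tangent line of the convex function `z ↦ z ^ (-ρ)` at `X`. -/
lemma rpow_neg_add_div_le {C ρ X Y : ℝ} (hC : 0 < C) (hρ : 0 ≤ ρ) (hX : 0 < X) (hY : 0 < Y)
    (h : X ^ (1 + ρ) ≤ C * (X - Y)) :
    X ^ (-ρ) + ρ / C ≤ Y ^ (-ρ) := by
  have hsplit : Y ^ (-ρ) = X ^ (-ρ) * (Y / X) ^ (-ρ) := by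
    rw [div_rpow hY.le hX.le, mul_div_cancel₀ _ (rpow_pos_of_pos hX _).ne']
  have hXY : 1 / C ≤ (X - Y) / (X * X ^ ρ) := by
    rw [div_le_div_iff₀ hC (by positivity), one_mul, ← rpow_one_add' hX.le (by positivity)]
    linarith
  calc X ^ (-ρ) + ρ / C
      ≤ X ^ (-ρ) + ρ * ((X - Y) / (X * X ^ ρ)) := by
        rw [div_eq_mul_one_div ρ C]; gcongr
    _ = X ^ (-ρ) * (1 - ρ * (Y / X - 1)) := by
        rw [rpow_neg hX.le]; field_simp; ring
    _ ≤ Y ^ (-ρ) := by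
        rw [hsplit]; gcongr; exact one_sub_mul_le_rpow_neg (div_pos hY hX) hρ

lemma le_rpow_neg_one_div_iff {a b ρ : ℝ} (ha : 0 < a) (hb : 0 < b) (hρ : 0 < ρ) :
    a ≤ b ^ (-1 / ρ) ↔ b ≤ a ^ (-ρ) := by
  rw [neg_div, one_div, ← inv_neg]
  exact le_rpow_inv_iff_of_neg ha hb (neg_neg_of_pos hρ)

end Real

open Real

lemma max_rpow_le_sSup_image_Icc {φ : ℝ → ℝ} {p a b : ℝ} (hp : 0 ≤ p) (hab : a ≤ b)
    (hφ : ContinuousOn φ (Icc a b)) :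
    max (φ a ^ p) (φ b ^ p) ≤ sSup ((fun s => φ s ^ p) '' Icc a b) := by
  have hbdd : BddAbove ((fun s => φ s ^ p) '' Icc a b) :=
    (isCompact_Icc.image_of_continuousOn (hφ.rpow_const fun _ _ => Or.inr hp)).bddAbove
  exact max_le (le_csSup hbdd (mem_image_of_mem _ (left_mem_Icc.2 hab)))
    (le_csSup hbdd (mem_image_of_mem _ (right_mem_Icc.2 hab)))

lemma max_rpow_le_of_nakao_recursion {T : EReal} {φ K : ℝ → ℝ} {C₀ p s t : ℝ} (hp : 0 ≤ p)
    (hφc : ContinuousOn φ {t : ℝ | 0 ≤ t ∧ (t : EReal) < T})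
    (hKmono : ∀ s t : ℝ, 0 ≤ s → s ≤ t → (t : EReal) < T → K s ≤ K t)
    (hrec : ∀ t : ℝ, 0 ≤ t → (t : EReal) + 1 ≤ T →
      sSup ((fun s => φ s ^ p) '' Icc t (t + 1)) ≤ C₀ * (φ t - φ (t + 1)) + K t)
    (hs : 0 ≤ s) (hst : s + 1 ≤ t) (htT : (t : EReal) < T) :
    max (φ s ^ p) (φ (s + 1) ^ p) ≤ C₀ * (φ s - φ (s + 1)) + K t := by
  have hle_T : ∀ r, r ≤ t → (r : EReal) < T := fun r hr =>
    (EReal.coe_le_coe_iff.2 hr).trans_lt htT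
  calc _ ≤ sSup ((fun s => φ s ^ p) '' Icc s (s + 1)) :=
        max_rpow_le_sSup_image_Icc hp (by linarith)
          (hφc.mono fun r hr => ⟨hs.trans hr.1, hle_T r (hr.2.trans hst)⟩)
    _ ≤ C₀ * (φ s - φ (s + 1)) + K s := hrec s hs (by exact_mod_cast (hle_T (s + 1) hst).le)
    _ ≤ _ := by gcongr; exact hKmono s t hs (by linarith) htT

section NakaoRecursion

variable {C ρ κ : ℝ}

lemma sub_le_rpow_add_of_nakao_step {w x y : ℝ} (hC : 0 < C) (hρ : 0 < ρ) (hκ : 0 ≤ κ)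
    (hw : 0 < w) (hxy : max (x ^ (1 + ρ)) (y ^ (1 + ρ)) ≤ C * (x - y) + κ)
    (hxw : x - κ ^ (1 / (1 + ρ)) ≤ w ^ (-1 / ρ)) :
    y - κ ^ (1 / (1 + ρ)) ≤ (w + ρ / C) ^ (-1 / ρ) := by
  set c := κ ^ (1 / (1 + ρ))
  have hc : 0 ≤ c := by positivity
  have hcκ : c ^ (1 + ρ) = κ := by simp only [c, one_div]; exact rpow_inv_rpow hκ (by positivity)
  rcases le_or_gt y c with hyc | hyc
  · have : 0 < (w + ρ / C) ^ (-1 / ρ) := by positivity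
    linarith
  have hpeel : ∀ z, c ≤ z → (z - c) ^ (1 + ρ) + κ ≤ z ^ (1 + ρ) := fun z hz => by
    simpa [hcκ] using add_rpow_le_rpow_add (sub_nonneg.2 hz) hc (by linarith : 1 ≤ 1 + ρ)
  obtain ⟨hx, hy⟩ := max_le_iff.1 hxy
  have hY : 0 < y - c := sub_pos.2 hyc
  have hyx : y < x := by
    have := hpeel y hyc.le
    have : 0 < (y - c) ^ (1 + ρ) := by positivity
    exact sub_pos.1 ((mul_pos_iff_of_pos_left hC).1 (by linarith))
  have hX : 0 < x - c := by linarith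
  have hXY : (x - c) ^ (1 + ρ) ≤ C * ((x - c) - (y - c)) := by
    linarith [hpeel x (by linarith), show x - c - (y - c) = x - y by ring]
  have hwX : w ≤ (x - c) ^ (-ρ) := (le_rpow_neg_one_div_iff hX hw hρ).1 hxw
  refine (le_rpow_neg_one_div_iff hY (by positivity) hρ).2 ?_
  linarith [rpow_neg_add_div_le hC hρ.le hX hY hXY]

theorem sub_le_rpow_of_nakao_recursion {w : ℝ} (hC : 0 < C) (hρ : 0 < ρ) (hκ : 0 ≤ κ)
    (hw : 0 < w) (x : ℕ → ℝ) (n : ℕ)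
    (hrec : ∀ j < n, max (x j ^ (1 + ρ)) (x (j + 1) ^ (1 + ρ)) ≤ C * (x j - x (j + 1)) + κ)
    (h0 : x 0 - κ ^ (1 / (1 + ρ)) ≤ w ^ (-1 / ρ)) :
    x n - κ ^ (1 / (1 + ρ)) ≤ (w + n * (ρ / C)) ^ (-1 / ρ) := by
  induction n with
  | zero => simpa using h0
  | succ n ih =>
    have hstep := sub_le_rpow_add_of_nakao_step hC hρ hκ (by positivity) (hrec n n.lt_succ_self)
      (ih fun j hj => hrec j (hj.trans n.lt_succ_self))
    rwa [Nat.cast_succ, add_one_mul, ← add_assoc]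

theorem sub_le_rpow_floor_of_nakao_recursion {w t : ℝ} {φ : ℝ → ℝ} (hC : 0 < C) (hρ : 0 < ρ)
    (hκ : 0 ≤ κ) (hw : 0 < w) (ht : 0 ≤ t)
    (hrec : ∀ s, 0 ≤ s → s + 1 ≤ t →
      max (φ s ^ (1 + ρ)) (φ (s + 1) ^ (1 + ρ)) ≤ C * (φ s - φ (s + 1)) + κ)
    (h0 : φ (t - ⌊t⌋₊) - κ ^ (1 / (1 + ρ)) ≤ w ^ (-1 / ρ)) :
    φ t - κ ^ (1 / (1 + ρ)) ≤ (w + ⌊t⌋₊ * (ρ / C)) ^ (-1 / ρ) := by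
  have hfloor : (⌊t⌋₊ : ℝ) ≤ t := Nat.floor_le ht
  have h := sub_le_rpow_of_nakao_recursion hC hρ hκ hw (fun j => φ (t - ⌊t⌋₊ + j)) ⌊t⌋₊
    (fun j hj => by
      have hj' : (j : ℝ) + 1 ≤ ⌊t⌋₊ := by exact_mod_cast hj
      rw [Nat.cast_succ, ← add_assoc]
      exact hrec _ (by linarith [j.cast_nonneg (α := ℝ)]) (by linarith))
    (by simpa using h0)
  rwa [sub_add_cancel] at h

end NakaoRecursion

theorem nakao_generalized_pos_general (T : EReal) (φ K : ℝ → ℝ)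
    (hφc : ContinuousOn φ {t : ℝ | 0 ≤ t ∧ (t : EReal) < T})
    (hK0 : ∀ t : ℝ, 0 ≤ t → (t : EReal) < T → 0 ≤ K t)
    (hKmono : ∀ s t : ℝ, 0 ≤ s → s ≤ t → (t : EReal) < T → K s ≤ K t)
    (hsup : 0 < sSup (φ '' Set.Icc 0 1))
    (C₀ ρ : ℝ) (hC₀ : 0 < C₀) (hρ : 0 < ρ)
    (hrec : ∀ t : ℝ, 0 ≤ t → (t : EReal) + 1 ≤ T →
      sSup ((fun s => φ s ^ (1 + ρ)) '' Set.Icc t (t + 1)) ≤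
        C₀ * (φ t - φ (t + 1)) + K t) :
    ∀ t : ℝ, 0 ≤ t → (t : EReal) < T →
      φ t ≤ (C₀⁻¹ * ρ * max (t - 1) 0 + sSup (φ '' Set.Icc 0 1) ^ (-ρ)) ^ (-1 / ρ)
        + K t ^ (1 / (ρ + 1)) := by
  intro t ht htT
  set M := sSup (φ '' Icc 0 1)
  -- `sSup` of a set that is not bounded above is `0`
  have hbdd : BddAbove (φ '' Icc 0 1) := by
    by_contra h
    exact hsup.ne' (Real.sSup_of_not_bddAbove h)
  have hfrac : φ (t - ⌊t⌋₊) ≤ M := le_csSup hbdd (mem_image_of_mem _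
    ⟨sub_nonneg.2 (Nat.floor_le ht), by linarith [Nat.lt_floor_add_one t]⟩)
  have hM : M ≤ (M ^ (-ρ)) ^ (-1 / ρ) := (le_rpow_neg_one_div_iff hsup (by positivity) hρ).2 le_rfl
  have hKt : 0 ≤ K t ^ (1 / (1 + ρ)) := rpow_nonneg (hK0 t ht htT) _
  have hmain := sub_le_rpow_floor_of_nakao_recursion (w := M ^ (-ρ)) hC₀ hρ (hK0 t ht htT)
    (by positivity) ht
    (fun s hs hst => max_rpow_le_of_nakao_recursion (by linarith) hφc hKmono hrec hs hst htT)
    (by linarith)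
  have hbase : C₀⁻¹ * ρ * max (t - 1) 0 + M ^ (-ρ) ≤ M ^ (-ρ) + ⌊t⌋₊ * (ρ / C₀) := by
    have : max (t - 1) 0 ≤ ⌊t⌋₊ := max_le (by linarith [Nat.lt_floor_add_one t]) (Nat.cast_nonneg _)
    rw [add_comm, inv_mul_eq_div, div_mul_eq_mul_div, mul_comm, mul_div_assoc]
    gcongr
  calc φ t ≤ (M ^ (-ρ) + ⌊t⌋₊ * (ρ / C₀)) ^ (-1 / ρ) + K t ^ (1 / (1 + ρ)) := by linarith
    _ ≤ _ := by
      rw [add_comm 1 ρ]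
      gcongr ?_ + _
      exact rpow_le_rpow_of_nonpos (by positivity) hbase
        (div_nonpos_of_nonpos_of_nonneg (by norm_num) hρ.le)

/-- Nakao's generalized lemma, case `ρ > 0`. Let `T > 1` (possibly `T = ∞`),
`φ` nonnegative and continuous on `[0,T)` with `sup_{[0,1]} φ > 0`, and `K`
nonnegative and nondecreasing on `[0,T)`. If
`sup_{t ≤ s ≤ t+1} φ(s)^{1+ρ} ≤ C₀ (φ(t) − φ(t+1)) + K(t)` for `0 ≤ t ≤ T−1`,
then `φ(t) ≤ (C₀⁻¹ ρ (t−1)⁺ + (sup_{[0,1]} φ)^{−ρ})^{−1/ρ} + K(t)^{1/(ρ+1)}`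
for all `0 ≤ t < T`. -/
theorem nakao_generalized_pos (T : EReal) (hT : 1 < T) (φ K : ℝ → ℝ)
    (hφ0 : ∀ t : ℝ, 0 ≤ t → (t : EReal) < T → 0 ≤ φ t)
    (hφc : ContinuousOn φ {t : ℝ | 0 ≤ t ∧ (t : EReal) < T})
    (hK0 : ∀ t : ℝ, 0 ≤ t → (t : EReal) < T → 0 ≤ K t)
    (hKmono : ∀ s t : ℝ, 0 ≤ s → s ≤ t → (t : EReal) < T → K s ≤ K t)
    (hsup : 0 < sSup (φ '' Set.Icc 0 1))
    (C₀ ρ : ℝ) (hC₀ : 0 < C₀) (hρ : 0 < ρ)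
    (hrec : ∀ t : ℝ, 0 ≤ t → (t : EReal) + 1 ≤ T →
      sSup ((fun s => φ s ^ (1 + ρ)) '' Set.Icc t (t + 1)) ≤
        C₀ * (φ t - φ (t + 1)) + K t) :
    ∀ t : ℝ, 0 ≤ t → (t : EReal) < T →
      φ t ≤ (C₀⁻¹ * ρ * max (t - 1) 0 + sSup (φ '' Set.Icc 0 1) ^ (-ρ)) ^ (-1 / ρ)
        + K t ^ (1 / (ρ + 1)) :=
  nakao_generalized_pos_general T φ K hφc hK0 hKmono hsup C₀ ρ hC₀ hρ hrec
end

section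
/- Let T > 1 (possibly T = ∞), let φ : [0,T) → ℝ be nonnegative and continuous, and let K : [0,T) → ℝ be nonnegative and nondecreasing. Suppose there exists a constant C₀ > 0 such that sup_{t ≤ s ≤ t+1} φ(s) ≤ C₀ (φ(t) − φ(t+1)) + K(t) for all 0 ≤ t ≤ T − 1. Then for all 0 ≤ t < T one has φ(t) ≤ (sup_{0 ≤ s ≤ 1} φ(s)) · ( C₀ / (1 + C₀) )^{⌊t⌋} + K(t). -/
/-!
Write `θ = C₀ / (1 + C₀)`. Since `φ (t + 1)` is bounded by the supremum over `[t, t + 1]`, the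
hypothesis rearranges to the one-step contraction `φ (t + 1) ≤ θ φ(t) + (1 - θ) K(t)`.
Iterating it along `s, s + 1, …, s + ⌊t⌋ = t` with `s = t - ⌊t⌋ ∈ [0, 1]`, and using that `K`
is nondecreasing, gives `φ t ≤ θ^⌊t⌋ φ(s) + (1 - θ^⌊t⌋) K(t)`, and `φ s ≤ sup_{[0,1]} φ`.
-/

open Set

theorem le_div_mul_add_of_le_mul_sub_add {a b k C : ℝ} (hC : 0 < 1 + C)
    (h : b ≤ C * (a - b) + k) : b ≤ C / (1 + C) * a + (1 - C / (1 + C)) * k := by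
  have hθ : 1 - C / (1 + C) = 1 / (1 + C) := by field_simp; ring
  rw [hθ, div_mul_eq_mul_div, div_mul_eq_mul_div, ← add_div, le_div_iff₀ hC]
  linarith

theorem le_pow_mul_add_of_le_mul_add {θ : ℝ} (hθ0 : 0 ≤ θ) (hθ1 : θ ≤ 1) {u k : ℕ → ℝ} {N : ℕ}
    (hk : ∀ n < N, k n ≤ k (n + 1)) (hu : ∀ n < N, u (n + 1) ≤ θ * u n + (1 - θ) * k n) :
    ∀ n ≤ N, u n ≤ u 0 * θ ^ n + (1 - θ ^ n) * k n := by
  intro n hn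
  induction n with
  | zero => simp
  | succ n ih =>
    have hn' : n < N := hn
    have hθn : 0 ≤ 1 - θ ^ (n + 1) := sub_nonneg.2 (pow_le_one₀ hθ0 hθ1)
    calc u (n + 1) ≤ θ * u n + (1 - θ) * k n := hu n hn'
      _ ≤ θ * (u 0 * θ ^ n + (1 - θ ^ n) * k n) + (1 - θ) * k n := by
          gcongr; exact ih hn'.le
      _ = u 0 * θ ^ (n + 1) + (1 - θ ^ (n + 1)) * k n := by ring
      _ ≤ u 0 * θ ^ (n + 1) + (1 - θ ^ (n + 1)) * k (n + 1) := by
          gcongr; exact hk n hn'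

section Nakao

variable {T : EReal} {φ : ℝ → ℝ}

theorem le_sSup_image_Icc_of_continuousOn (hφc : ContinuousOn φ {t : ℝ | 0 ≤ t ∧ (t : EReal) < T})
    {a b x : ℝ} (ha : 0 ≤ a) (hb : (b : EReal) < T) (hx : x ∈ Icc a b) :
    φ x ≤ sSup (φ '' Icc a b) := by
  have hsub : Icc a b ⊆ {t : ℝ | 0 ≤ t ∧ (t : EReal) < T} := fun y hy =>
    ⟨ha.trans hy.1, (EReal.coe_le_coe_iff.2 hy.2).trans_lt hb⟩
  exact le_csSup (isCompact_Icc.image_of_continuousOn (hφc.mono hsub)).bddAbove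
    (mem_image_of_mem φ hx)

theorem le_div_mul_add_of_sSup_image_Icc_le {K : ℝ → ℝ} {C₀ : ℝ} (hC₀ : 0 < C₀)
    (hφc : ContinuousOn φ {t : ℝ | 0 ≤ t ∧ (t : EReal) < T})
    (hrec : ∀ t : ℝ, 0 ≤ t → (t : EReal) + 1 ≤ T →
      sSup (φ '' Icc t (t + 1)) ≤ C₀ * (φ t - φ (t + 1)) + K t)
    {t : ℝ} (ht : 0 ≤ t) (htT : ((t + 1 : ℝ) : EReal) < T) :
    φ (t + 1) ≤ C₀ / (1 + C₀) * φ t + (1 - C₀ / (1 + C₀)) * K t := by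
  have hsup : φ (t + 1) ≤ sSup (φ '' Icc t (t + 1)) :=
    le_sSup_image_Icc_of_continuousOn hφc ht htT ⟨by linarith, le_rfl⟩
  have hrec_t := hrec t ht (by exact_mod_cast htT.le)
  exact le_div_mul_add_of_le_mul_sub_add (by linarith) (hsup.trans hrec_t)

end Nakao

theorem nakao_generalized_zero_general (T : EReal) (hT : 1 < T) (φ K : ℝ → ℝ)
    (hφc : ContinuousOn φ {t : ℝ | 0 ≤ t ∧ (t : EReal) < T})
    (hK0 : ∀ t : ℝ, 0 ≤ t → (t : EReal) < T → 0 ≤ K t)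
    (hKmono : ∀ s t : ℝ, 0 ≤ s → s ≤ t → (t : EReal) < T → K s ≤ K t)
    (C₀ : ℝ) (hC₀ : 0 < C₀)
    (hrec : ∀ t : ℝ, 0 ≤ t → (t : EReal) + 1 ≤ T →
      sSup (φ '' Set.Icc t (t + 1)) ≤ C₀ * (φ t - φ (t + 1)) + K t) :
    ∀ t : ℝ, 0 ≤ t → (t : EReal) < T →
      φ t ≤ sSup (φ '' Set.Icc 0 1) * (C₀ / (1 + C₀)) ^ ⌊t⌋₊ + K t := by
  intro t ht htT
  set θ := C₀ / (1 + C₀)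
  have hθ0 : 0 ≤ θ := by positivity
  have hθ1 : θ ≤ 1 := (div_le_one (by linarith)).2 (by linarith)
  set n := ⌊t⌋₊
  set s := t - n
  have hs0 : 0 ≤ s := sub_nonneg.2 (Nat.floor_le ht)
  have hs1 : s ≤ 1 := by linarith [Nat.lt_floor_add_one t]
  have hbelow : ∀ x : ℝ, x ≤ t → (x : EReal) < T := fun x hx =>
    (EReal.coe_le_coe_iff.2 hx).trans_lt htT
  have hstep_le : ∀ m < n, (m : ℝ) + s + 1 ≤ t := fun m hm => by
    have : (m : ℝ) + 1 ≤ n := by exact_mod_cast hm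
    linarith
  have hiter := le_pow_mul_add_of_le_mul_add hθ0 hθ1 (u := fun m : ℕ => φ (m + s))
    (k := fun m : ℕ => K (m + s)) (N := n)
    (fun m hm => by
      push_cast
      exact hKmono _ _ (by positivity) (by linarith) (hbelow _ (by linarith [hstep_le m hm])))
    (fun m hm => by
      simpa [add_right_comm] using le_div_mul_add_of_sSup_image_Icc_le hC₀ hφc hrec
        (by positivity : (0 : ℝ) ≤ m + s) (hbelow _ (hstep_le m hm)))
    n le_rfl
  have hn_add_s : (n : ℝ) + s = t := by ring
  simp only [hn_add_s, CharP.cast_eq_zero, zero_add] at hiter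
  have hφs : φ s ≤ sSup (φ '' Icc 0 1) :=
    le_sSup_image_Icc_of_continuousOn hφc le_rfl (by exact_mod_cast hT) ⟨hs0, hs1⟩
  have hθn : 0 ≤ θ ^ n := pow_nonneg hθ0 n
  nlinarith [hK0 t ht htT]

/-- Nakao's generalized lemma, case `ρ = 0`. Let `T > 1` (possibly `T = ∞`),
`φ` nonnegative and continuous on `[0,T)`, and `K` nonnegative and
nondecreasing on `[0,T)`. If
`sup_{t ≤ s ≤ t+1} φ(s) ≤ C₀ (φ(t) − φ(t+1)) + K(t)` for `0 ≤ t ≤ T−1`, then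
`φ(t) ≤ (sup_{[0,1]} φ) (C₀/(1+C₀))^{⌊t⌋} + K(t)` for all `0 ≤ t < T`. -/
theorem nakao_generalized_zero (T : EReal) (hT : 1 < T) (φ K : ℝ → ℝ)
    (hφ0 : ∀ t : ℝ, 0 ≤ t → (t : EReal) < T → 0 ≤ φ t)
    (hφc : ContinuousOn φ {t : ℝ | 0 ≤ t ∧ (t : EReal) < T})
    (hK0 : ∀ t : ℝ, 0 ≤ t → (t : EReal) < T → 0 ≤ K t)
    (hKmono : ∀ s t : ℝ, 0 ≤ s → s ≤ t → (t : EReal) < T → K s ≤ K t)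
    (C₀ : ℝ) (hC₀ : 0 < C₀)
    (hrec : ∀ t : ℝ, 0 ≤ t → (t : EReal) + 1 ≤ T →
      sSup (φ '' Set.Icc t (t + 1)) ≤ C₀ * (φ t - φ (t + 1)) + K t) :
    ∀ t : ℝ, 0 ≤ t → (t : EReal) < T →
      φ t ≤ sSup (φ '' Set.Icc 0 1) * (C₀ / (1 + C₀)) ^ ⌊t⌋₊ + K t :=
  nakao_generalized_zero_general T hT φ K hφc hK0 hKmono C₀ hC₀ hrec
end

section
/- Let ρ > 0 and C₀ > 0 be real constants, and let a, b be real numbers with a ≥ b > 0 and a^{1+ρ} ≤ C₀ (a − b). Then b^{−ρ} ≥ a^{−ρ} + ρ C₀^{−1}. -/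
/-!
With `t = a / b`, the bound `e^x ≥ 1 + x` followed by `log t ≥ 1 - t⁻¹` gives
`t ^ ρ ≥ 1 + ρ (1 - b / a)`, i.e. the convex function `x ↦ x ^ (-ρ)` lies above its tangent at `a`:
`b ^ (-ρ) ≥ a ^ (-ρ) + ρ (a - b) / a ^ (1 + ρ)`. The hypothesis says exactly that the last
term is at least `ρ / C₀`.
-/

open Real

lemma one_add_mul_one_sub_inv_le_rpow {x p : ℝ} (hx : 0 < x) (hp : 0 ≤ p) :
    1 + p * (1 - x⁻¹) ≤ x ^ p :=
  calc 1 + p * (1 - x⁻¹) ≤ p * log x + 1 := by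
        linarith [mul_le_mul_of_nonneg_left (one_sub_inv_le_log_of_pos hx) hp]
    _ ≤ exp (p * log x) := add_one_le_exp _
    _ = x ^ p := by rw [rpow_def_of_pos hx, mul_comm]

lemma rpow_neg_add_mul_sub_div_le_rpow_neg {a b ρ : ℝ} (ha : 0 < a) (hb : 0 < b) (hρ : 0 ≤ ρ) :
    a ^ (-ρ) + ρ * (a - b) / a ^ (1 + ρ) ≤ b ^ (-ρ) := by
  have hb_rpow : b ^ (-ρ) = a ^ (-ρ) * (a / b) ^ ρ := by
    rw [div_rpow ha.le hb.le, rpow_neg ha.le, rpow_neg hb.le]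
    field_simp
  have ha_rpow : a ^ (1 + ρ) = a * a ^ ρ := by rw [rpow_add ha, rpow_one]
  have hbern := one_add_mul_one_sub_inv_le_rpow (div_pos ha hb) hρ
  rw [inv_div] at hbern
  calc a ^ (-ρ) + ρ * (a - b) / a ^ (1 + ρ) = a ^ (-ρ) * (1 + ρ * (1 - b / a)) := by
        rw [ha_rpow, rpow_neg ha.le]
        field_simp
    _ ≤ a ^ (-ρ) * (a / b) ^ ρ := by gcongr
    _ = b ^ (-ρ) := hb_rpow.symm

/-- If `a ≥ b > 0` and `a^(1+ρ) ≤ C₀ (a − b)` with `ρ, C₀ > 0`,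
then `b^(−ρ) ≥ a^(−ρ) + ρ C₀⁻¹`. -/
theorem rpow_neg_ge_of_rpow_le (ρ C₀ a b : ℝ) (hρ : 0 < ρ) (hC₀ : 0 < C₀)
    (hb : 0 < b) (hba : b ≤ a) (h : a ^ (1 + ρ) ≤ C₀ * (a - b)) :
    a ^ (-ρ) + ρ * C₀⁻¹ ≤ b ^ (-ρ) := by
  have ha : 0 < a := hb.trans_le hba
  have hC₀_inv : C₀⁻¹ ≤ (a - b) / a ^ (1 + ρ) := by
    rw [le_div_iff₀ (rpow_pos_of_pos ha _), inv_mul_le_iff₀ hC₀]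
    exact h
  calc a ^ (-ρ) + ρ * C₀⁻¹ ≤ a ^ (-ρ) + ρ * ((a - b) / a ^ (1 + ρ)) := by gcongr
    _ = a ^ (-ρ) + ρ * (a - b) / a ^ (1 + ρ) := by rw [mul_div_assoc]
    _ ≤ b ^ (-ρ) := rpow_neg_add_mul_sub_div_le_rpow_neg ha hb hρ.le
end
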